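/- Define φ₂(p) = sin²p / p² + 3(2p − sin 2p)² / (16p⁴) − 1 for p ≠ 0. Then φ₂(p) < 0 for all p with 0 < |p| ≤ π. (Geometrically: the half-ellipse r² + 12z² = 1, r ≥ 0, lies outside the curve r = sin p / p, z = (2p − sin 2p)/(8p²), p ∈ [−π, π], which is the profile of the unit sub-Riemannian sphere of the Heisenberg group, meeting it only at the point (r,z) = (1,0).) -/

import Mathlib

/-!
With `q = 2p` and `sin² p = (1 - cos q) / 2`, the claim `φ₂ p < 0` becomes
`2q²(1 - cos q) + 3(q - sin q)² < q⁴`, which in fact holds for every `q > 0`. For `q > 4` the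
crude bounds `|sin q|, |cos q| ≤ 1` suffice. For `q ≤ 4` the leading terms cancel up to order
`q⁸` (the difference is `-q⁸/180 + O(q¹⁰)`), so one needs the alternating Taylor bounds
`cos q ≥ 1 - q²/2 + q⁴/24 - q⁶/720` and `sin q ≥ q - q³/6 + q⁵/120 - q⁷/5040`; these follow
by repeatedly integrating `cos ≤ 1` from `0`.
-/

open Real

/-- The restriction of `f₂(r,z) = r² + 12z² − 1` to the profile curve of the unit
sub-Riemannian sphere of the Heisenberg group. -/
noncomputable def φ₂ (p : ℝ) : ℝ :=
  Real.sin p ^ 2 / p ^ 2 + 3 * (2 * p - Real.sin (2 * p)) ^ 2 / (16 * p ^ 4) - 1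

open Finset Nat

noncomputable def sinTaylor (n : ℕ) (x : ℝ) : ℝ :=
  ∑ k ∈ range n, (-1) ^ k * x ^ (2 * k + 1) / (2 * k + 1)!

noncomputable def cosTaylor (n : ℕ) (x : ℝ) : ℝ :=
  ∑ k ∈ range n, (-1) ^ k * x ^ (2 * k) / (2 * k)!

theorem hasDerivAt_sinTaylor (n : ℕ) (x : ℝ) :
    HasDerivAt (sinTaylor n) (cosTaylor n x) x := by
  have h := HasDerivAt.fun_sum (u := range n) fun k _ =>
    ((hasDerivAt_pow (2 * k + 1) x).const_mul ((-1 : ℝ) ^ k)).div_const ((2 * k + 1)! : ℝ)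
  refine h.congr_deriv (sum_congr rfl fun k _ => ?_)
  rw [Nat.factorial_succ]
  push_cast
  field_simp

theorem hasDerivAt_cosTaylor_succ (n : ℕ) (x : ℝ) :
    HasDerivAt (cosTaylor (n + 1)) (-sinTaylor n x) x := by
  have h := HasDerivAt.fun_sum (u := range (n + 1)) fun k _ =>
    ((hasDerivAt_pow (2 * k) x).const_mul ((-1 : ℝ) ^ k)).div_const ((2 * k)! : ℝ)
  refine h.congr_deriv ?_
  rw [sum_range_succ', sinTaylor, ← sum_neg_distrib]
  simp only [mul_zero, Nat.cast_zero, zero_mul, zero_div, add_zero]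
  refine sum_congr rfl fun k _ => ?_
  rw [show 2 * (k + 1) = (2 * k + 1) + 1 by ring, Nat.factorial_succ]
  push_cast
  field_simp
  ring

theorem le_of_hasDerivAt_nonneg {f f' : ℝ → ℝ} (hf : ∀ y, HasDerivAt f (f' y) y)
    (hf' : ∀ y, 0 < y → 0 ≤ f' y) {x : ℝ} (hx : 0 ≤ x) : f 0 ≤ f x := by
  refine monotoneOn_of_hasDerivWithinAt_nonneg (convex_Ici 0)
    (fun y _ => (hf y).continuousAt.continuousWithinAt) (fun y _ => (hf y).hasDerivWithinAt)
    (fun y hy => hf' y ?_) Set.self_mem_Ici hx hx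
  simpa using hy

theorem sinTaylor_remainder_nonneg_of_cosTaylor {n : ℕ}
    (hcos : ∀ y, 0 ≤ y → 0 ≤ (-1) ^ n * (cos y - cosTaylor n y)) {x : ℝ} (hx : 0 ≤ x) :
    0 ≤ (-1) ^ n * (sin x - sinTaylor n x) := by
  have h := le_of_hasDerivAt_nonneg
    (fun y => ((hasDerivAt_sin y).sub (hasDerivAt_sinTaylor n y)).const_mul ((-1 : ℝ) ^ n))
    (fun y hy => hcos y hy.le) hx
  simpa [sinTaylor] using h

theorem cosTaylor_remainder_nonneg_of_sinTaylor {n : ℕ}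
    (hsin : ∀ y, 0 ≤ y → 0 ≤ (-1) ^ n * (sin y - sinTaylor n y)) {x : ℝ} (hx : 0 ≤ x) :
    0 ≤ (-1) ^ (n + 1) * (cos x - cosTaylor (n + 1) x) := by
  have h := le_of_hasDerivAt_nonneg
    (fun y => ((hasDerivAt_cos y).sub (hasDerivAt_cosTaylor_succ n y)).const_mul
      ((-1 : ℝ) ^ (n + 1)))
    (fun y hy => by have := hsin y hy.le; rw [pow_succ]; linarith) hx
  simpa [cosTaylor, sum_range_succ'] using h

theorem cosTaylor_remainder_nonneg (n : ℕ) {x : ℝ} (hx : 0 ≤ x) :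
    0 ≤ (-1) ^ (n + 1) * (cos x - cosTaylor (n + 1) x) := by
  induction n generalizing x with
  | zero => simpa [cosTaylor] using cos_le_one x
  | succ n ih =>
    exact cosTaylor_remainder_nonneg_of_sinTaylor
      (fun y hy => sinTaylor_remainder_nonneg_of_cosTaylor (fun z hz => ih hz) hy) hx

theorem sinTaylor_remainder_nonneg (n : ℕ) {x : ℝ} (hx : 0 ≤ x) :
    0 ≤ (-1) ^ (n + 1) * (sin x - sinTaylor (n + 1) x) :=
  sinTaylor_remainder_nonneg_of_cosTaylor (fun _ hy => cosTaylor_remainder_nonneg n hy) hx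

theorem taylor_six_le_cos {x : ℝ} (hx : 0 ≤ x) :
    1 - x ^ 2 / 2 + x ^ 4 / 24 - x ^ 6 / 720 ≤ cos x := by
  have h := cosTaylor_remainder_nonneg 3 hx
  norm_num [cosTaylor, sum_range_succ, Nat.factorial] at h
  linarith

theorem taylor_seven_le_sin {x : ℝ} (hx : 0 ≤ x) :
    x - x ^ 3 / 6 + x ^ 5 / 120 - x ^ 7 / 5040 ≤ sin x := by
  have h := sinTaylor_remainder_nonneg 3 hx
  norm_num [sinTaylor, sum_range_succ, Nat.factorial] at h
  linarith

theorem sq_mul_one_sub_cos_add_sub_sin_sq_lt_of_le_four {q : ℝ} (hq : 0 < q) (hq4 : q ≤ 4) :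
    2 * q ^ 2 * (1 - cos q) + 3 * (q - sin q) ^ 2 < q ^ 4 := by
  have hcos : 1 - cos q ≤ q ^ 2 / 2 - q ^ 4 / 24 + q ^ 6 / 720 := by
    linarith [taylor_six_le_cos hq.le]
  have hsin : (q - sin q) ^ 2 ≤ (q ^ 3 / 6 - q ^ 5 / 120 + q ^ 7 / 5040) ^ 2 :=
    pow_le_pow_left₀ (by linarith [sin_le hq.le]) (by linarith [taylor_seven_le_sin hq.le]) 2
  -- After these substitutions the defect is `q⁸ g(q²)` for a cubic `g` that is negative on
  -- `[0, 16]`; the three products below certify this.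
  have cert₁ : 0 ≤ q ^ 8 * ((16 - q ^ 2) * q ^ 4) := by
    have : 0 ≤ 16 - q ^ 2 := by nlinarith
    positivity
  have cert₂ : 0 ≤ q ^ 8 * (q ^ 2 - 25) ^ 2 := by positivity
  have cert₃ : 0 < q ^ 8 * (4540 - 44 * q ^ 2) := mul_pos (pow_pos hq 8) (by nlinarith)
  nlinarith [pow_pos hq 2]

theorem sq_mul_one_sub_cos_add_sub_sin_sq_lt_of_four_lt {q : ℝ} (hq4 : 4 < q) :
    2 * q ^ 2 * (1 - cos q) + 3 * (q - sin q) ^ 2 < q ^ 4 := by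
  have hcos : 1 - cos q ≤ 2 := by linarith [neg_one_le_cos q]
  have hsin : (q - sin q) ^ 2 ≤ (q + 1) ^ 2 :=
    pow_le_pow_left₀ (by linarith [sin_le_one q]) (by linarith [neg_one_le_sin q]) 2
  nlinarith [sq_nonneg (q - 4)]

theorem sq_mul_one_sub_cos_add_sub_sin_sq_lt {q : ℝ} (hq : 0 < q) :
    2 * q ^ 2 * (1 - cos q) + 3 * (q - sin q) ^ 2 < q ^ 4 := by
  rcases le_or_gt q 4 with hq4 | hq4
  · exact sq_mul_one_sub_cos_add_sub_sin_sq_lt_of_le_four hq hq4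
  · exact sq_mul_one_sub_cos_add_sub_sin_sq_lt_of_four_lt hq4

theorem φ₂_eq (p : ℝ) :
    φ₂ p = (2 * (2 * p) ^ 2 * (1 - cos (2 * p)) + 3 * (2 * p - sin (2 * p)) ^ 2) / (2 * p) ^ 4
      - 1 := by
  rcases eq_or_ne p 0 with rfl | hp
  · simp [φ₂]
  rw [φ₂, sin_sq_eq_half_sub]
  field_simp
  ring

theorem φ₂_neg (p : ℝ) : φ₂ (-p) = φ₂ p := by
  simp only [φ₂, mul_neg, sin_neg]
  ring

theorem φ₂_lt_zero_of_pos {p : ℝ} (hp : 0 < p) : φ₂ p < 0 := by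
  rw [φ₂_eq, sub_neg, div_lt_one (by positivity)]
  exact sq_mul_one_sub_cos_add_sub_sin_sq_lt (by positivity)

theorem φ₂_lt_zero {p : ℝ} (hp : p ≠ 0) : φ₂ p < 0 := by
  rcases hp.lt_or_gt with hp | hp
  · simpa only [φ₂_neg, neg_neg] using φ₂_lt_zero_of_pos (neg_pos.2 hp)
  · exact φ₂_lt_zero_of_pos hp

theorem stmt12 : ∀ p : ℝ, 0 < |p| → |p| ≤ Real.pi → φ₂ p < 0 :=
  fun _ hp _ => φ₂_lt_zero (abs_pos.1 hp)
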